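/- arXiv:1808.04007 — 2 statements merged into one kernel-verified Lean document; each statement's English description precedes it below -/
import Mathlib

section
/- The image of the injective algebra map φ̄: U^{n−1} → U^n (sending u_{ij} to v_{ijn}) equals the subalgebra V^n of U^n generated by all elements v_{ijk} = u_{ij} + u_{jk} + u_{ki} for triples of distinct indices 1 ≤ i, j, k ≤ n. In particular, for distinct i, j, k ≤ n−1 one has v_{ijk} = v_{ijn} − v_{ikn} + v_{jkn}. -/
open MvPolynomial

noncomputable def uVar {n : ℕ} (i j : Fin n) (h : i ≠ j) :
    MvPolynomial {p : Fin n × Fin n // p.1 ≠ p.2} ℚ :=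
  X ⟨(i, j), h⟩

/-- The defining ideal of the ring `U^n`. -/
noncomputable def uIdeal (n : ℕ) : Ideal (MvPolynomial {p : Fin n × Fin n // p.1 ≠ p.2} ℚ) :=
  Ideal.span { q | (∃ (i j : Fin n) (h : i ≠ j), q = uVar i j h * uVar i j h)
    ∨ (∃ (i j : Fin n) (h : i ≠ j), q = uVar i j h + uVar j i h.symm)
    ∨ (∃ (i j k : Fin n) (hij : i ≠ j) (hjk : j ≠ k) (hki : k ≠ i),
        q = uVar i j hij * uVar j k hjk + uVar j k hjk * uVar k i hki
          + uVar k i hki * uVar i j hij) }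

/-- The ring `U^n = ℚ[u_{ij} : i ≠ j] / I`. -/
abbrev URing (n : ℕ) := MvPolynomial {p : Fin n × Fin n // p.1 ≠ p.2} ℚ ⧸ uIdeal n

noncomputable def u {n : ℕ} (i j : Fin n) (h : i ≠ j) : URing n :=
  Ideal.Quotient.mk (uIdeal n) (uVar i j h)

noncomputable def v {n : ℕ} (i j k : Fin n) (hij : i ≠ j) (hjk : j ≠ k) (hki : k ≠ i) :
    URing n :=
  u i j hij + u j k hjk + u k i hki

/-- The algebra map `φ : ℚ[u_{ij} : i ≠ j ≤ n-1] → ℚ[u_{ij} : i ≠ j ≤ n]`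
sending `u_{ij} ↦ v_{ijn} = u_{ij} + u_{jn} + u_{ni}` (here with `n-1` replaced by `n`
and `n` by `n+1`, so the last index plays the role of `n`). -/
noncomputable def phiMap (n : ℕ) :
    MvPolynomial {p : Fin n × Fin n // p.1 ≠ p.2} ℚ →ₐ[ℚ]
      MvPolynomial {p : Fin (n + 1) × Fin (n + 1) // p.1 ≠ p.2} ℚ :=
  aeval fun q =>
    uVar (Fin.castSucc q.1.1) (Fin.castSucc q.1.2)
        (fun h => q.2 (Fin.castSucc_injective n h))
      + uVar (Fin.castSucc q.1.2) (Fin.last n) (Fin.castSucc_lt_last _).ne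
      + uVar (Fin.last n) (Fin.castSucc q.1.1) (Fin.castSucc_lt_last _).ne'

/-- The subalgebra `V^n ⊆ U^n` generated by all `v_{ijk}` for distinct `i, j, k`. -/
noncomputable def Vsub (n : ℕ) : Subalgebra ℚ (URing n) :=
  Algebra.adjoin ℚ
    { x | ∃ (i j k : Fin n) (hij : i ≠ j) (hjk : j ≠ k) (hki : k ≠ i),
        x = v i j k hij hjk hki }

/-!
The antisymmetry `u_{ij} = -u_{ji}` alone gives `v_{ijk} = v_{ijl} - v_{ikl} + v_{jkl}` for any
fourth index `l`, and `v` is invariant under rotation of its indices. Hence `V^n` is generated by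
the `v_{ijl}` with `l` the last index, and these are exactly the images `φ̄(u_{ij})`.
-/

lemma u_add_u_swap {m : ℕ} (i j : Fin m) (h : i ≠ j) : u i j h + u j i h.symm = 0 := by
  rw [u, u, ← map_add, Ideal.Quotient.eq_zero_iff_mem]
  exact Ideal.subset_span (Or.inr (Or.inl ⟨i, j, h, rfl⟩))

lemma v_rotate {m : ℕ} (i j k : Fin m) (hij : i ≠ j) (hjk : j ≠ k) (hki : k ≠ i) :
    v i j k hij hjk hki = v j k i hjk hki hij := by
  simp only [v]; ring

lemma v_eq_sub_add {m : ℕ} (i j k l : Fin m) (hij : i ≠ j) (hjk : j ≠ k) (hki : k ≠ i)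
    (hil : i ≠ l) (hjl : j ≠ l) (hkl : k ≠ l) :
    v i j k hij hjk hki = v i j l hij hjl hil.symm - v i k l hki.symm hkl hil.symm
      + v j k l hjk hkl hjl.symm := by
  simp only [v]
  linear_combination u_add_u_swap k i hki - u_add_u_swap j l hjl

def vThrough {m : ℕ} (l : Fin m) : Set (URing m) :=
  { x | ∃ (i j : Fin m) (hij : i ≠ j) (hjl : j ≠ l) (hli : l ≠ i), x = v i j l hij hjl hli }

lemma v_mem_adjoin_vThrough {m : ℕ} (l i j k : Fin m) (hij : i ≠ j) (hjk : j ≠ k)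
    (hki : k ≠ i) : v i j k hij hjk hki ∈ Algebra.adjoin ℚ (vThrough l) := by
  have mem : ∀ a b (hab : a ≠ b) (hbl : b ≠ l) (hla : l ≠ a),
      v a b l hab hbl hla ∈ Algebra.adjoin ℚ (vThrough l) :=
    fun a b hab hbl hla => Algebra.subset_adjoin ⟨a, b, hab, hbl, hla, rfl⟩
  rcases eq_or_ne k l with rfl | hkl
  · exact mem _ _ _ _ _
  rcases eq_or_ne i l with rfl | hil
  · rw [v_rotate]; exact mem _ _ _ _ _
  rcases eq_or_ne j l with rfl | hjl
  · rw [v_rotate, v_rotate]; exact mem _ _ _ _ _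
  rw [v_eq_sub_add i j k l hij hjk hki hil hjl hkl]
  exact add_mem (sub_mem (mem _ _ _ _ _) (mem _ _ _ _ _)) (mem _ _ _ _ _)

lemma Vsub_eq_adjoin_vThrough {m : ℕ} (l : Fin m) : Vsub m = Algebra.adjoin ℚ (vThrough l) :=
  le_antisymm
    (Algebra.adjoin_le fun _ ⟨i, j, k, hij, hjk, hki, hx⟩ =>
      hx ▸ v_mem_adjoin_vThrough l i j k hij hjk hki)
    (Algebra.adjoin_mono fun _ ⟨i, j, hij, hjl, hli, hx⟩ => ⟨i, j, l, hij, hjl, hli, hx⟩)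

noncomputable def phiBarGen (n : ℕ) (q : {p : Fin n × Fin n // p.1 ≠ p.2}) : URing (n + 1) :=
  v (Fin.castSucc q.1.1) (Fin.castSucc q.1.2) (Fin.last n)
    (fun h => q.2 (Fin.castSucc_injective n h))
    (Fin.castSucc_lt_last _).ne (Fin.castSucc_lt_last _).ne'

lemma mk_phiMap (n : ℕ) (p : MvPolynomial {p : Fin n × Fin n // p.1 ≠ p.2} ℚ) :
    Ideal.Quotient.mk (uIdeal (n + 1)) (phiMap n p) = aeval (phiBarGen n) p := by
  change (Ideal.Quotient.mkₐ ℚ (uIdeal (n + 1))).comp (phiMap n) p = _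
  rw [phiMap, comp_aeval]
  rfl

lemma range_phiBarGen (n : ℕ) : Set.range (phiBarGen n) = vThrough (Fin.last n) := by
  ext x
  constructor
  · rintro ⟨q, rfl⟩
    exact ⟨_, _, _, _, _, rfl⟩
  · rintro ⟨i, j, hij, hjl, hli, rfl⟩
    obtain ⟨i', rfl⟩ := Fin.exists_castSucc_eq.mpr hli.symm
    obtain ⟨j', rfl⟩ := Fin.exists_castSucc_eq.mpr hjl
    exact ⟨⟨(i', j'), fun h => hij (congrArg Fin.castSucc h)⟩, rfl⟩

theorem phi_image_eq_Vsub_general (n : ℕ) :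
    ({ x : URing (n + 1) |
        ∃ p : MvPolynomial {p : Fin n × Fin n // p.1 ≠ p.2} ℚ,
          x = Ideal.Quotient.mk (uIdeal (n + 1)) (phiMap n p) }
      = (Vsub (n + 1) : Set (URing (n + 1)))) ∧
    ∀ (i j k : Fin n) (hij : i ≠ j) (hjk : j ≠ k) (hki : k ≠ i),
      v (Fin.castSucc i) (Fin.castSucc j) (Fin.castSucc k)
          (fun h => hij (Fin.castSucc_injective n h))
          (fun h => hjk (Fin.castSucc_injective n h))
          (fun h => hki (Fin.castSucc_injective n h))
        = v (Fin.castSucc i) (Fin.castSucc j) (Fin.last n)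
            (fun h => hij (Fin.castSucc_injective n h))
            (Fin.castSucc_lt_last _).ne (Fin.castSucc_lt_last _).ne'
          - v (Fin.castSucc i) (Fin.castSucc k) (Fin.last n)
              (fun h => hki (Fin.castSucc_injective n h).symm)
              (Fin.castSucc_lt_last _).ne (Fin.castSucc_lt_last _).ne'
          + v (Fin.castSucc j) (Fin.castSucc k) (Fin.last n)
              (fun h => hjk (Fin.castSucc_injective n h))
              (Fin.castSucc_lt_last _).ne (Fin.castSucc_lt_last _).ne' := by
  refine ⟨?_, fun i j k hij hjk hki => v_eq_sub_add _ _ _ (Fin.last n) _ _ _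
    (Fin.castSucc_lt_last i).ne (Fin.castSucc_lt_last j).ne (Fin.castSucc_lt_last k).ne⟩
  rw [Vsub_eq_adjoin_vThrough (Fin.last n), ← range_phiBarGen,
    Algebra.adjoin_range_eq_range_aeval]
  ext x
  simp only [mk_phiMap, Set.mem_ofPred_eq, SetLike.mem_coe, AlgHom.mem_range, eq_comm]

/-- The image of the injective algebra map `φ̄ : U^{n-1} → U^n` (induced by
`u_{ij} ↦ v_{ijn}`) equals the subalgebra `V^n` generated by the `v_{ijk}`; in particular,
for distinct `i, j, k ≤ n-1`, `v_{ijk} = v_{ijn} − v_{ikn} + v_{jkn}`. -/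
theorem phi_image_eq_Vsub (n : ℕ) (hn : 2 ≤ n) :
    ({ x : URing (n + 1) |
        ∃ p : MvPolynomial {p : Fin n × Fin n // p.1 ≠ p.2} ℚ,
          x = Ideal.Quotient.mk (uIdeal (n + 1)) (phiMap n p) }
      = (Vsub (n + 1) : Set (URing (n + 1)))) ∧
    ∀ (i j k : Fin n) (hij : i ≠ j) (hjk : j ≠ k) (hki : k ≠ i),
      v (Fin.castSucc i) (Fin.castSucc j) (Fin.castSucc k)
          (fun h => hij (Fin.castSucc_injective n h))
          (fun h => hjk (Fin.castSucc_injective n h))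
          (fun h => hki (Fin.castSucc_injective n h))
        = v (Fin.castSucc i) (Fin.castSucc j) (Fin.last n)
            (fun h => hij (Fin.castSucc_injective n h))
            (Fin.castSucc_lt_last _).ne (Fin.castSucc_lt_last _).ne'
          - v (Fin.castSucc i) (Fin.castSucc k) (Fin.last n)
              (fun h => hki (Fin.castSucc_injective n h).symm)
              (Fin.castSucc_lt_last _).ne (Fin.castSucc_lt_last _).ne'
          + v (Fin.castSucc j) (Fin.castSucc k) (Fin.last n)
              (fun h => hjk (Fin.castSucc_injective n h))
              (Fin.castSucc_lt_last _).ne (Fin.castSucc_lt_last _).ne' :=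
  phi_image_eq_Vsub_general n
end

section
/- In the ring U^n, every product of two generators lies in the ideal J generated by the elements v_{ijk} = u_{ij} + u_{jk} + u_{ki}: that is, for any distinct indices, u_{ij}^2 = 0, u_{ij}u_{jk} ∈ J, and u_{ij}u_{kℓ} ∈ J for distinct quadruples i, j, k, ℓ. Hence the quotient ring U^n/J vanishes in degrees ≥ 2. -/
open MvPolynomial

/-- The ideal `J ⊆ U^n` generated by the elements `v_{ijk}`. -/
noncomputable def Jideal (n : ℕ) : Ideal (URing n) :=
  Ideal.span
    { x | ∃ (i j k : Fin n) (hij : i ≠ j) (hjk : j ≠ k) (hki : k ≠ i),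
        x = v i j k hij hjk hki }

lemma u_mul_self {n : ℕ} (i j : Fin n) (h : i ≠ j) : u i j h * u i j h = 0 := by
  have hm : uVar i j h * uVar i j h ∈ uIdeal n :=
    Ideal.subset_span (Or.inl ⟨i, j, h, rfl⟩)
  simp only [u, ← map_mul]
  exact Ideal.Quotient.eq_zero_iff_mem.mpr hm

lemma u_anti {n : ℕ} (i j : Fin n) (h : i ≠ j) : u j i h.symm = - u i j h := by
  have hm : uVar i j h + uVar j i h.symm ∈ uIdeal n :=
    Ideal.subset_span (Or.inr (Or.inl ⟨i, j, h, rfl⟩))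
  have h0 : u i j h + u j i h.symm = 0 := by
    simp only [u, ← map_add]
    exact Ideal.Quotient.eq_zero_iff_mem.mpr hm
  linear_combination h0

lemma u_arnold {n : ℕ} (i j k : Fin n) (hij : i ≠ j) (hjk : j ≠ k) (hki : k ≠ i) :
    u i j hij * u j k hjk + u j k hjk * u k i hki + u k i hki * u i j hij = 0 := by
  have hm : uVar i j hij * uVar j k hjk + uVar j k hjk * uVar k i hki
      + uVar k i hki * uVar i j hij ∈ uIdeal n :=
    Ideal.subset_span (Or.inr (Or.inr ⟨i, j, k, hij, hjk, hki, rfl⟩))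
  simp only [u, ← map_mul, ← map_add]
  exact Ideal.Quotient.eq_zero_iff_mem.mpr hm

lemma v_mem {n : ℕ} (i j k : Fin n) (hij : i ≠ j) (hjk : j ≠ k) (hki : k ≠ i) :
    v i j k hij hjk hki ∈ Jideal n :=
  Ideal.subset_span ⟨i, j, k, hij, hjk, hki, rfl⟩

lemma mem2 {n : ℕ} (i j k : Fin n) (hij : i ≠ j) (hjk : j ≠ k) :
    u i j hij * u j k hjk ∈ Jideal n := by
  by_cases hki : k = i
  · subst hki
    have e : u j k hjk = - u k j hij := u_anti k j hij
    have : u k j hij * u j k hjk = 0 := by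
      rw [e]
      have := u_mul_self k j hij
      linear_combination -this
    rw [this]; exact zero_mem _
  · have hki' : k ≠ i := fun e => hki e
    have key : u i j hij * u j k hjk = (- u k i hki') * v i j k hij hjk hki' := by
      simp only [v]
      linear_combination u_arnold i j k hij hjk hki' + u_mul_self k i hki'
    rw [key]
    exact Ideal.mul_mem_left _ _ (v_mem i j k hij hjk hki')

lemma mem3 {n : ℕ} (i j k l : Fin n) (hij : i ≠ j) (hkl : k ≠ l)
    (hik : i ≠ k) (hil : i ≠ l) (hjk : j ≠ k) (hjl : j ≠ l) :
    u i j hij * u k l hkl ∈ Jideal n := by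
  have hlj : l ≠ j := hjl.symm
  have ha : u l j hlj = - u j l hjl := u_anti j l hjl
  have e : u i j hij * u k l hkl =
      u i j hij * v j k l hjk hkl hlj - u i j hij * u j k hjk
        + u i j hij * u j l hjl := by
    simp only [v]
    linear_combination (-(u i j hij)) * ha
  rw [e]
  exact add_mem (sub_mem (Ideal.mul_mem_left _ _ (v_mem j k l hjk hkl hlj))
    (mem2 i j k hij hjk)) (mem2 i j l hij hjl)

/-- Every product of two generators of `U^n` lies in the ideal `J` generated by the
`v_{ijk}`: `u_{ij}² = 0`, `u_{ij}u_{jk} ∈ J`, `u_{ij}u_{kℓ} ∈ J` for distinct quadruples;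
hence every product of two generators lies in `J`, so `U^n/J` vanishes in degrees `≥ 2`. -/
theorem products_in_J (n : ℕ) :
    (∀ (i j : Fin n) (h : i ≠ j), u i j h ^ 2 = 0) ∧
    (∀ (i j k : Fin n) (hij : i ≠ j) (hjk : j ≠ k),
        u i j hij * u j k hjk ∈ Jideal n) ∧
    (∀ (i j k l : Fin n) (hij : i ≠ j) (hkl : k ≠ l),
        i ≠ k → i ≠ l → j ≠ k → j ≠ l → u i j hij * u k l hkl ∈ Jideal n) ∧
    (∀ (i j k l : Fin n) (hij : i ≠ j) (hkl : k ≠ l),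
        u i j hij * u k l hkl ∈ Jideal n) := by
  refine ⟨fun i j h => by rw [sq]; exact u_mul_self i j h,
    fun i j k hij hjk => mem2 i j k hij hjk,
    fun i j k l hij hkl h1 h2 h3 h4 => mem3 i j k l hij hkl h1 h2 h3 h4,
    fun i j k l hij hkl => ?_⟩
  by_cases h1 : j = k
  · subst h1; exact mem2 i j l hij hkl
  by_cases h2 : i = l
  · subst h2; rw [mul_comm]; exact mem2 k i j hkl hij
  by_cases h3 : i = k
  · subst h3
    have key : u i j hij * u i l hkl = -(u j i hij.symm * u i l hkl) := by
      linear_combination (u i l hkl) * (u_anti i j hij)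
    rw [key]
    exact neg_mem (mem2 j i l hij.symm hkl)
  by_cases h4 : j = l
  · subst h4
    have e : u k j hkl = - u j k hkl.symm := u_anti j k hkl.symm
    have key : u i j hij * u k j hkl = -(u i j hij * u j k hkl.symm) := by
      linear_combination (u i j hij) * e
    rw [key]
    exact neg_mem (mem2 i j k hij hkl.symm)
  · exact mem3 i j k l hij hkl (fun e => h3 e) (fun e => h2 e)
      (fun e => h1 e) (fun e => h4 e)
end
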